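/- Let u1, u2, v1, v2 be nonnegative Borel measurable functions on ℝ^N vanishing at infinity. Then ∫_{ℝ^N} (u1·u2 + v1·v2) dx ≤ ∫_{ℝ^N} {u1,v1}⋆ · {u2,v2}⋆ dx. -/

import Mathlib

noncomputable section

open MeasureTheory Filter Topology

abbrev EN (N : ℕ) := EuclideanSpace ℝ (Fin N)

/-- A Borel measurable function `u` on `ℝ^N` vanishes at infinity if
`|{x : |u x| > t}| < ∞` for every `t > 0`. -/
def VanishAtInfinity {N : ℕ} (u : EN N → ℝ) : Prop :=
  ∀ t : ℝ, 0 < t → volume {x : EN N | t < |u x|} < ⊤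

/-- `A⋆(u,v;t)`: the open ball `B(0,r)` centered at the origin whose volume equals
`|{u > t}| + |{v > t}|`. -/
def Astar {N : ℕ} (u v : EN N → ℝ) (t : ℝ) : Set (EN N) :=
  Metric.ball 0 (sInf {r : ℝ | 0 ≤ r ∧
    volume {x : EN N | t < u x} + volume {x : EN N | t < v x}
      ≤ volume (Metric.ball (0 : EN N) r)})

/-- The rearrangement `{u,v}⋆(x) = ∫₀^∞ χ_{A⋆(u,v;t)}(x) dt` of Shibata. -/
def rearr {N : ℕ} (u v : EN N → ℝ) (x : EN N) : ℝ :=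
  ∫ t in Set.Ioi (0 : ℝ), (Astar u v t).indicator (fun _ => (1 : ℝ)) x

/-!
By the layer-cake formula in two variables and Tonelli,
`∫ f g = ∫∫ |{f > t} ∩ {g > s}| dt ds` for `f ≥ 0`, and in the same way
`∫ {u1,v1}⋆ {u2,v2}⋆ = ∫∫ |A⋆(u1,v1;t) ∩ A⋆(u2,v2;s)| dt ds`.
The sets `A⋆` are concentric balls, so the measure of their intersection is
`min (|{u1 > t}| + |{v1 > t}|) (|{u2 > s}| + |{v2 > s}|)`, which dominates
`|{u1 > t} ∩ {u2 > s}| + |{v1 > t} ∩ {v2 > s}|` pointwise in `(t, s)`.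
-/

open Set Metric Module
open scoped ENNReal

section RadiusOfMeasure

variable {E : Type*} [NormedAddCommGroup E] [NormedSpace ℝ E] [MeasurableSpace E]

-- Inverts `Measure.addHaar_ball`; since `ENNReal.toReal ⊤ = 0`, the value at `m = ⊤` is `0`.
def radiusOfMeasure (μ : Measure E) (m : ℝ≥0∞) : ℝ :=
  (m / μ (ball 0 1)).toReal ^ ((finrank ℝ E : ℝ)⁻¹)

variable {μ : Measure E}

theorem radiusOfMeasure_nonneg (m : ℝ≥0∞) : 0 ≤ radiusOfMeasure μ m :=
  Real.rpow_nonneg ENNReal.toReal_nonneg _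

theorem measurable_radiusOfMeasure : Measurable (radiusOfMeasure μ) :=
  (Real.continuous_rpow_const (by positivity)).measurable.comp
    (measurable_id.div_const _).ennreal_toReal

variable [FiniteDimensional ℝ E] [μ.IsAddHaarMeasure] [Nontrivial E]

theorem radiusOfMeasure_top : radiusOfMeasure μ ⊤ = 0 := by
  rw [radiusOfMeasure, ENNReal.top_div_of_ne_top measure_ball_lt_top.ne, ENNReal.toReal_top,
    Real.zero_rpow (inv_ne_zero (Nat.cast_ne_zero.2 finrank_pos.ne'))]

variable [BorelSpace E]

theorem measure_ball_radiusOfMeasure {m : ℝ≥0∞} (hm : m ≠ ⊤) :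
    μ (ball 0 (radiusOfMeasure μ m)) = m := by
  have hpos : μ (ball (0 : E) 1) ≠ 0 := (measure_ball_pos μ 0 one_pos).ne'
  rw [Measure.addHaar_ball μ 0 (radiusOfMeasure_nonneg m), radiusOfMeasure,
    Real.rpow_inv_natCast_pow ENNReal.toReal_nonneg finrank_pos.ne',
    ENNReal.ofReal_toReal (ENNReal.div_lt_top hm hpos).ne,
    ENNReal.div_mul_cancel hpos measure_ball_lt_top.ne]

theorem measure_ball_radiusOfMeasure_le (m : ℝ≥0∞) : μ (ball 0 (radiusOfMeasure μ m)) ≤ m := by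
  rcases eq_or_ne m ⊤ with rfl | hm
  · exact le_top
  · exact (measure_ball_radiusOfMeasure hm).le

theorem strictMonoOn_measure_ball_zero :
    StrictMonoOn (fun r => μ (ball (0 : E) r)) (Ici 0) := by
  intro r (hr : 0 ≤ r) s (hs : 0 ≤ s) hrs
  simp only [Measure.addHaar_ball μ 0 hr, Measure.addHaar_ball μ 0 hs]
  gcongr
  · exact (measure_ball_pos μ 0 one_pos).ne'
  · exact measure_ball_lt_top.ne
  · exact ENNReal.ofReal_lt_ofReal_iff'.2
      ⟨pow_lt_pow_left₀ hrs hr finrank_pos.ne', pow_pos (hr.trans_lt hrs) _⟩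

theorem radiusOfMeasure_le_iff {m : ℝ≥0∞} (hm : m ≠ ⊤) {r : ℝ} (hr : 0 ≤ r) :
    radiusOfMeasure μ m ≤ r ↔ m ≤ μ (ball 0 r) := by
  rw [← (strictMonoOn_measure_ball_zero (μ := μ)).le_iff_le (radiusOfMeasure_nonneg m) hr,
    measure_ball_radiusOfMeasure hm]

theorem sInf_setOf_le_measure_ball (m : ℝ≥0∞) :
    sInf {r : ℝ | 0 ≤ r ∧ m ≤ μ (ball 0 r)} = radiusOfMeasure μ m := by
  rcases eq_or_ne m ⊤ with rfl | hm
  · have hempty : {r : ℝ | 0 ≤ r ∧ ⊤ ≤ μ (ball 0 r)} = ∅ :=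
      eq_empty_of_forall_notMem fun r hr => measure_ball_lt_top.not_ge hr.2
    rw [hempty, Real.sInf_empty, radiusOfMeasure_top]
  · have hIci : {r : ℝ | 0 ≤ r ∧ m ≤ μ (ball 0 r)} = Ici (radiusOfMeasure μ m) := by
      ext r
      refine ⟨fun ⟨hr, h⟩ => (radiusOfMeasure_le_iff hm hr).2 h, fun h => ?_⟩
      have hr := (radiusOfMeasure_nonneg m).trans h
      exact ⟨hr, (radiusOfMeasure_le_iff hm hr).1 h⟩
    rw [hIci, csInf_Ici]

end RadiusOfMeasure

theorem measure_ball_inter_ball_eq_min {α : Type*} [PseudoMetricSpace α] [MeasurableSpace α]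
    (μ : Measure α) (c : α) (r₁ r₂ : ℝ) :
    μ (ball c r₁ ∩ ball c r₂) = min (μ (ball c r₁)) (μ (ball c r₂)) := by
  rcases le_total r₁ r₂ with h | h
  · rw [inter_eq_left.2 (ball_subset_ball h), min_eq_left (measure_mono (ball_subset_ball h))]
  · rw [inter_eq_right.2 (ball_subset_ball h), min_eq_right (measure_mono (ball_subset_ball h))]

theorem antitone_setOf_lt {α : Type*} (f : α → ℝ) : Antitone fun t => {x | t < f x} :=
  fun _ _ hst _ hx => hst.trans_lt hx

section SuperlevelSets

variable {α : Type*} [MeasurableSpace α] {μ : Measure α}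

theorem antitone_measure_setOf_lt (f : α → ℝ) :
    Antitone fun t => μ {x | t < f x} :=
  fun _ _ hst => measure_mono (antitone_setOf_lt f hst)

theorem tendsto_measure_setOf_lt_atTop {f : α → ℝ} (hf : Measurable f) {t₀ : ℝ}
    (ht₀ : μ {x | t₀ < f x} ≠ ⊤) : Tendsto (fun t => μ {x | t < f x}) atTop (𝓝 0) := by
  have hempty : ⋂ t : ℝ, {x | t < f x} = ∅ :=
    eq_empty_of_forall_notMem fun x hx => lt_irrefl (f x) (mem_iInter.1 hx (f x))
  have := tendsto_measure_iInter_atTop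
    (fun t => (measurableSet_lt measurable_const hf).nullMeasurableSet) (antitone_setOf_lt f)
    ⟨t₀, ht₀⟩
  rwa [hempty, measure_empty] at this

theorem volume_restrict_Ioi_zero_Iio (a : ℝ) :
    volume.restrict (Ioi 0) (Iio a) = ENNReal.ofReal a := by
  rw [Measure.restrict_apply measurableSet_Iio, Iio_inter_Ioi, Real.volume_Ioo, sub_zero]

variable {β : Type*} [MeasurableSpace β] {ν : Measure β} [SFinite μ] [SFinite ν]

theorem lintegral_measure_mul_measure_eq_lintegral_measure_inter {F G : β → Set α}
    (hF : MeasurableSet {p : β × α | p.2 ∈ F p.1})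
    (hG : MeasurableSet {p : β × α | p.2 ∈ G p.1}) :
    ∫⁻ x, ν {t | x ∈ F t} * ν {s | x ∈ G s} ∂μ = ∫⁻ t, ∫⁻ s, μ (F t ∩ G s) ∂ν ∂ν := by
  let W : Set ((β × β) × α) := {p | p.2 ∈ F p.1.1 ∩ G p.1.2}
  have hW : MeasurableSet W :=
    (hF.preimage (measurable_fst.fst.prodMk measurable_snd)).inter
      (hG.preimage (measurable_fst.snd.prodMk measurable_snd))
  calc ∫⁻ x, ν {t | x ∈ F t} * ν {s | x ∈ G s} ∂μ = (ν.prod ν).prod μ W := by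
        rw [Measure.prod_apply_symm hW]
        congr with x
        rw [← Measure.prod_prod]
        rfl
    _ = ∫⁻ z, μ (F z.1 ∩ G z.2) ∂ν.prod ν := Measure.prod_apply hW
    _ = ∫⁻ t, ∫⁻ s, μ (F t ∩ G s) ∂ν ∂ν :=
        lintegral_prod _ (measurable_measure_prodMk_left hW).aemeasurable

theorem lintegral_ofReal_mul_eq_lintegral_measure_inter {f g : α → ℝ} (hf : Measurable f)
    (hg : Measurable g) (hf0 : ∀ x, 0 ≤ f x) :
    ∫⁻ x, ENNReal.ofReal (f x * g x) ∂μ =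
      ∫⁻ t in Ioi 0, ∫⁻ s in Ioi 0, μ ({x | t < f x} ∩ {x | s < g x}) := by
  rw [← lintegral_measure_mul_measure_eq_lintegral_measure_inter (F := fun t => {x | t < f x})
    (G := fun s => {x | s < g x})
    (measurableSet_lt measurable_fst (hf.comp measurable_snd))
    (measurableSet_lt measurable_fst (hg.comp measurable_snd))]
  congr with x
  rw [ENNReal.ofReal_mul (hf0 x), ← volume_restrict_Ioi_zero_Iio,
    ← volume_restrict_Ioi_zero_Iio]
  rfl

end SuperlevelSets

section Rearrangement

variable {N : ℕ} {u v : EN N → ℝ}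

theorem VanishAtInfinity.measure_setOf_lt_ne_top (hu : VanishAtInfinity u) {t : ℝ}
    (ht : 0 < t) :
    volume {x | t < u x} ≠ ⊤ :=
  ((measure_mono fun x (hx : t < u x) => hx.trans_le (le_abs_self _)).trans_lt (hu t ht)).ne

theorem nontrivial_EN (hN : 1 ≤ N) : Nontrivial (EN N) := by
  have : NeZero N := ⟨by omega⟩
  infer_instance

theorem Astar_eq_ball (hN : 1 ≤ N) (u v : EN N → ℝ) (t : ℝ) :
    Astar u v t = ball 0 (radiusOfMeasure (volume : Measure (EN N))
      (volume {x | t < u x} + volume {x | t < v x})) := by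
  have := nontrivial_EN hN
  rw [Astar, sInf_setOf_le_measure_ball]

theorem volume_Astar_le (hN : 1 ≤ N) (u v : EN N → ℝ) (t : ℝ) :
    volume (Astar u v t) ≤ volume {x | t < u x} + volume {x | t < v x} := by
  have := nontrivial_EN hN
  rw [Astar_eq_ball hN]
  exact measure_ball_radiusOfMeasure_le _

theorem volume_Astar (hN : 1 ≤ N) (hu : VanishAtInfinity u) (hv : VanishAtInfinity v) {t : ℝ}
    (ht : 0 < t) : volume (Astar u v t) = volume {x | t < u x} + volume {x | t < v x} := by
  have := nontrivial_EN hN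
  rw [Astar_eq_ball hN]
  exact measure_ball_radiusOfMeasure
    (ENNReal.add_ne_top.2 ⟨hu.measure_setOf_lt_ne_top ht, hv.measure_setOf_lt_ne_top ht⟩)

theorem measurableSet_setOf_mem_Astar (hN : 1 ≤ N) (u v : EN N → ℝ) :
    MeasurableSet {p : ℝ × EN N | p.2 ∈ Astar u v p.1} := by
  simp_rw [Astar_eq_ball hN, mem_ball_zero_iff]
  exact measurableSet_lt measurable_snd.norm (measurable_radiusOfMeasure.comp
    ((antitone_measure_setOf_lt u).add (antitone_measure_setOf_lt v)).measurable
    |>.comp measurable_fst)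

theorem exists_setOf_mem_Astar_subset_Iio (hN : 1 ≤ N) (hum : Measurable u)
    (hvm : Measurable v) (hu : VanishAtInfinity u) (hv : VanishAtInfinity v) {x : EN N}
    (hx : x ≠ 0) : ∃ T, {t | x ∈ Astar u v t} ⊆ Iio T := by
  have := nontrivial_EN hN
  have hball : 0 < volume (ball (0 : EN N) ‖x‖) := measure_ball_pos _ _ (norm_pos_iff.2 hx)
  have hlim := (tendsto_measure_setOf_lt_atTop hum (hu.measure_setOf_lt_ne_top one_pos)).add
    (tendsto_measure_setOf_lt_atTop hvm (hv.measure_setOf_lt_ne_top one_pos))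
  rw [add_zero] at hlim
  obtain ⟨T, hT⟩ := eventually_atTop.1 (hlim.eventually (gt_mem_nhds hball))
  refine ⟨T, fun t (hxt : x ∈ Astar u v t) => lt_of_not_ge fun hTt => (hT t hTt).not_ge ?_⟩
  calc volume (ball (0 : EN N) ‖x‖)
      ≤ volume (Astar u v t) := measure_mono (ball_subset_ball (mem_ball_zero_iff.1 hxt).le)
    _ ≤ _ := volume_Astar_le hN u v t

theorem rearr_nonneg (u v : EN N → ℝ) (x : EN N) : 0 ≤ rearr u v x :=
  integral_nonneg fun _ => indicator_nonneg (fun _ _ => zero_le_one) _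

theorem ofReal_rearr (hN : 1 ≤ N) (hum : Measurable u) (hvm : Measurable v)
    (hu : VanishAtInfinity u) (hv : VanishAtInfinity v) {x : EN N} (hx : x ≠ 0) :
    ENNReal.ofReal (rearr u v x) = volume.restrict (Ioi 0) {t | x ∈ Astar u v t} := by
  have hS : MeasurableSet {t | x ∈ Astar u v t} :=
    measurable_prodMk_right (measurableSet_setOf_mem_Astar hN u v)
  obtain ⟨T, hT⟩ := exists_setOf_mem_Astar_subset_Iio hN hum hvm hu hv hx
  have hfin : volume.restrict (Ioi 0) {t | x ∈ Astar u v t} ≠ ⊤ :=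
    ne_top_of_le_ne_top (by rw [volume_restrict_Ioi_zero_Iio]; exact ENNReal.ofReal_ne_top)
      (measure_mono hT)
  rw [← ofReal_measureReal hfin, ← integral_indicator_one hS]
  rfl

theorem lintegral_ofReal_rearr_mul_rearr (hN : 1 ≤ N) {u1 u2 v1 v2 : EN N → ℝ}
    (hu1m : Measurable u1) (hu2m : Measurable u2) (hv1m : Measurable v1) (hv2m : Measurable v2)
    (hu1v : VanishAtInfinity u1) (hu2v : VanishAtInfinity u2)
    (hv1v : VanishAtInfinity v1) (hv2v : VanishAtInfinity v2) :
    ∫⁻ x, ENNReal.ofReal (rearr u1 v1 x * rearr u2 v2 x) =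
      ∫⁻ t in Ioi 0, ∫⁻ s in Ioi 0, volume (Astar u1 v1 t ∩ Astar u2 v2 s) := by
  have := nontrivial_EN hN
  rw [← lintegral_measure_mul_measure_eq_lintegral_measure_inter
    (measurableSet_setOf_mem_Astar hN u1 v1) (measurableSet_setOf_mem_Astar hN u2 v2)]
  refine lintegral_congr_ae ?_
  filter_upwards [Measure.ae_ne volume (0 : EN N)] with x hx
  rw [ENNReal.ofReal_mul (rearr_nonneg u1 v1 x), ofReal_rearr hN hu1m hv1m hu1v hv1v hx,
    ofReal_rearr hN hu2m hv2m hu2v hv2v hx]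

theorem measure_inter_add_measure_inter_le_volume_Astar_inter (hN : 1 ≤ N)
    {u1 u2 v1 v2 : EN N → ℝ} (hu1v : VanishAtInfinity u1) (hu2v : VanishAtInfinity u2)
    (hv1v : VanishAtInfinity v1) (hv2v : VanishAtInfinity v2) {t s : ℝ} (ht : 0 < t)
    (hs : 0 < s) :
    volume ({x | t < u1 x} ∩ {x | s < u2 x}) + volume ({x | t < v1 x} ∩ {x | s < v2 x}) ≤
      volume (Astar u1 v1 t ∩ Astar u2 v2 s) := by
  calc volume ({x | t < u1 x} ∩ {x | s < u2 x}) + volume ({x | t < v1 x} ∩ {x | s < v2 x})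
      ≤ min (volume {x | t < u1 x} + volume {x | t < v1 x})
          (volume {x | s < u2 x} + volume {x | s < v2 x}) :=
        le_min (add_le_add (measure_mono inter_subset_left) (measure_mono inter_subset_left))
          (add_le_add (measure_mono inter_subset_right) (measure_mono inter_subset_right))
    _ = min (volume (Astar u1 v1 t)) (volume (Astar u2 v2 s)) := by
        rw [volume_Astar hN hu1v hv1v ht, volume_Astar hN hu2v hv2v hs]
    _ = volume (Astar u1 v1 t ∩ Astar u2 v2 s) := (measure_ball_inter_ball_eq_min _ _ _ _).symm

end Rearrangement

theorem rearr_product_inequality_general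
    (N : ℕ) (hN : 1 ≤ N) (u1 u2 v1 v2 : EN N → ℝ)
    (hu10 : ∀ x, 0 ≤ u1 x)
    (hv10 : ∀ x, 0 ≤ v1 x)
    (hu1m : Measurable u1) (hu2m : Measurable u2)
    (hv1m : Measurable v1) (hv2m : Measurable v2)
    (hu1v : VanishAtInfinity u1) (hu2v : VanishAtInfinity u2)
    (hv1v : VanishAtInfinity v1) (hv2v : VanishAtInfinity v2) :
    (∫⁻ x, ENNReal.ofReal (u1 x * u2 x + v1 x * v2 x)) ≤
      ∫⁻ x, ENNReal.ofReal (rearr u1 v1 x * rearr u2 v2 x) := by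
  calc ∫⁻ x, ENNReal.ofReal (u1 x * u2 x + v1 x * v2 x)
      ≤ ∫⁻ x, ENNReal.ofReal (u1 x * u2 x) + ENNReal.ofReal (v1 x * v2 x) :=
        lintegral_mono fun _ => ENNReal.ofReal_add_le
    _ = (∫⁻ t in Ioi 0, ∫⁻ s in Ioi 0, volume ({x | t < u1 x} ∩ {x | s < u2 x})) +
          ∫⁻ t in Ioi 0, ∫⁻ s in Ioi 0, volume ({x | t < v1 x} ∩ {x | s < v2 x}) := by
        rw [lintegral_add_left (by fun_prop : Measurable fun x => ENNReal.ofReal (u1 x * u2 x)),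
          lintegral_ofReal_mul_eq_lintegral_measure_inter hu1m hu2m hu10,
          lintegral_ofReal_mul_eq_lintegral_measure_inter hv1m hv2m hv10]
    _ ≤ ∫⁻ t in Ioi 0, ∫⁻ s in Ioi 0, (volume ({x | t < u1 x} ∩ {x | s < u2 x}) +
          volume ({x | t < v1 x} ∩ {x | s < v2 x})) :=
        (le_lintegral_add _ _).trans (lintegral_mono fun _ => le_lintegral_add _ _)
    _ ≤ ∫⁻ t in Ioi 0, ∫⁻ s in Ioi 0, volume (Astar u1 v1 t ∩ Astar u2 v2 s) :=
        setLIntegral_mono' measurableSet_Ioi fun _ ht => setLIntegral_mono' measurableSet_Ioi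
          fun _ hs => measure_inter_add_measure_inter_le_volume_Astar_inter hN hu1v hu2v hv1v hv2v
            ht hs
    _ = ∫⁻ x, ENNReal.ofReal (rearr u1 v1 x * rearr u2 v2 x) :=
        (lintegral_ofReal_rearr_mul_rearr hN hu1m hu2m hv1m hv2m hu1v hu2v hv1v hv2v).symm

/-- Lemma 2.1 (v): for nonnegative Borel measurable functions `u1, u2, v1, v2`
vanishing at infinity,
`∫ (u1·u2 + v1·v2) ≤ ∫ {u1,v1}⋆ · {u2,v2}⋆` (as an inequality in `[0,∞]`). -/
theorem rearr_product_inequality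
    (N : ℕ) (hN : 1 ≤ N) (u1 u2 v1 v2 : EN N → ℝ)
    (hu10 : ∀ x, 0 ≤ u1 x) (hu20 : ∀ x, 0 ≤ u2 x)
    (hv10 : ∀ x, 0 ≤ v1 x) (hv20 : ∀ x, 0 ≤ v2 x)
    (hu1m : Measurable u1) (hu2m : Measurable u2)
    (hv1m : Measurable v1) (hv2m : Measurable v2)
    (hu1v : VanishAtInfinity u1) (hu2v : VanishAtInfinity u2)
    (hv1v : VanishAtInfinity v1) (hv2v : VanishAtInfinity v2) :
    (∫⁻ x, ENNReal.ofReal (u1 x * u2 x + v1 x * v2 x)) ≤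
      ∫⁻ x, ENNReal.ofReal (rearr u1 v1 x * rearr u2 v2 x) :=
  rearr_product_inequality_general N hN u1 u2 v1 v2 hu10 hv10 hu1m hu2m hv1m hv2m hu1v hu2v hv1v
    hv2v
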